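/- arXiv:2111.11256 — 3 statements merged into one kernel-verified Lean document; each statement's English description precedes it below -/
import Mathlib

section
/- The function g(x) = 2·ℓ(x)·D(x) − D, where ℓ(x)·D(x) = (∫ₓ^∞ ℓ(a)² da)/(∫ₓ^∞ ℓ(a) da) and D = (∫₀^∞ ℓ²)/(∫₀^∞ ℓ), is strictly decreasing in x. -/
open MeasureTheory Set

theorem g_strictly_decreasing
    (μ : ℝ → ℝ) (hμc : Continuous μ) (hμpos : ∀ x, 0 < μ x)
    (ℓ : ℝ → ℝ) (hℓ : ∀ x, ℓ x = Real.exp (-∫ a in (0:ℝ)..x, μ a))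
    (hint : IntegrableOn ℓ (Ioi 0))
    (g : ℝ → ℝ)
    (hg : ∀ x, g x = 2 * ((∫ a in Ioi x, (ℓ a)^2) / (∫ a in Ioi x, ℓ a))
        - (∫ a in Ioi (0:ℝ), (ℓ a)^2) / (∫ a in Ioi (0:ℝ), ℓ a)) :
    StrictAntiOn g (Ici 0) := by
  have hℓeq : ℓ = fun x => Real.exp (-∫ a in (0:ℝ)..x, μ a) := funext hℓ
  -- derivative of the primitive of a continuous function
  have hprim : ∀ (f : ℝ → ℝ), Continuous f → ∀ x : ℝ,
      HasDerivAt (fun y => ∫ a in (0:ℝ)..y, f a) (f x) x := fun f hf x =>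
    intervalIntegral.integral_hasDerivAt_right (hf.intervalIntegrable 0 x)
      (hf.stronglyMeasurableAtFilter _ _) hf.continuousAt
  have hImono : StrictMono (fun y => ∫ a in (0:ℝ)..y, μ a) := by
    apply strictMono_of_deriv_pos
    intro x
    rw [(hprim μ hμc x).deriv]
    exact hμpos x
  have hℓanti : StrictAnti ℓ := by
    rw [hℓeq]
    intro a b hab
    exact Real.exp_lt_exp.2 (neg_lt_neg (hImono hab))
  have hℓcont : Continuous ℓ := by
    rw [hℓeq]
    exact Real.continuous_exp.comp
      ((Differentiable.continuous fun x => (hprim μ hμc x).differentiableAt).neg)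
  have hℓpos : ∀ x, 0 < ℓ x := fun x => by rw [hℓ x]; exact Real.exp_pos _
  have hint2 : IntegrableOn (fun a => ℓ a ^ 2) (Ioi 0) := by
    refine Integrable.mono' (hint.const_mul (ℓ 0)) ((hℓcont.pow 2).aestronglyMeasurable) ?_
    filter_upwards [ae_restrict_mem measurableSet_Ioi] with a ha
    have h1 : 0 < ℓ a := hℓpos a
    have h2 : ℓ a ≤ ℓ 0 := hℓanti.antitone (le_of_lt ha)
    rw [Real.norm_eq_abs, abs_of_nonneg (by positivity)]
    nlinarith
  -- splitting lemma
  have hsplit : ∀ (f : ℝ → ℝ), IntegrableOn f (Ioi 0) → ∀ x : ℝ, 0 ≤ x →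
      (∫ a in Ioi x, f a) = (∫ a in Ioi 0, f a) - ∫ a in (0:ℝ)..x, f a := by
    intro f hf x hx
    rw [intervalIntegral.integral_of_le hx, eq_sub_iff_add_eq, add_comm,
      ← MeasureTheory.setIntegral_union (Ioc_disjoint_Ioi le_rfl) measurableSet_Ioi
        (hf.mono_set Ioc_subset_Ioi_self) (hf.mono_set (Ioi_subset_Ioi hx)),
      Ioc_union_Ioi_eq_Ioi hx]
  have hGpos : ∀ x : ℝ, 0 ≤ x → 0 < ∫ a in Ioi x, ℓ a := by
    intro x hx
    have hi := hint.mono_set (Ioi_subset_Ioi hx)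
    refine (setIntegral_pos_iff_support_of_nonneg_ae ?_ hi).2 ?_
    · filter_upwards with a using (hℓpos a).le
    · have hss : Ioi x ⊆ Function.support ℓ ∩ Ioi x := fun a ha =>
        ⟨(hℓpos a).ne', ha⟩
      refine lt_of_lt_of_le ?_ (measure_mono hss)
      rw [Real.volume_Ioi]
      exact ENNReal.zero_lt_top
  have hkey : ∀ x : ℝ, 0 ≤ x → (∫ a in Ioi x, ℓ a ^ 2) < ℓ x * ∫ a in Ioi x, ℓ a := by
    intro x hx
    have hi1 := hint.mono_set (Ioi_subset_Ioi hx)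
    have hi2 := hint2.mono_set (Ioi_subset_Ioi hx)
    have hi3 : IntegrableOn (fun a => ℓ x * ℓ a - ℓ a ^ 2) (Ioi x) := (hi1.const_mul _).sub hi2
    have hpos : 0 < ∫ a in Ioi x, (ℓ x * ℓ a - ℓ a ^ 2) := by
      refine (setIntegral_pos_iff_support_of_nonneg_ae ?_ hi3).2 ?_
      · filter_upwards [ae_restrict_mem measurableSet_Ioi] with a ha
        have h1 : ℓ a < ℓ x := hℓanti ha
        have h2 := hℓpos a
        simp only [Pi.zero_apply]
        nlinarith
      · have hss : Ioi x ⊆ Function.support (fun a => ℓ x * ℓ a - ℓ a ^ 2) ∩ Ioi x := by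
          intro a ha
          have h1 : ℓ a < ℓ x := hℓanti ha
          have h2 := hℓpos a
          refine ⟨?_, ha⟩
          simp only [Function.mem_support]
          nlinarith
        refine lt_of_lt_of_le ?_ (measure_mono hss)
        rw [Real.volume_Ioi]
        exact ENNReal.zero_lt_top
    have heq : ∫ a in Ioi x, (ℓ x * ℓ a - ℓ a ^ 2)
        = ℓ x * (∫ a in Ioi x, ℓ a) - ∫ a in Ioi x, ℓ a ^ 2 := by
      rw [integral_sub (hi1.const_mul _) hi2, MeasureTheory.integral_const_mul]
    rw [heq] at hpos
    linarith
  -- derivatives of F and G at x > 0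
  have hGderiv : ∀ x : ℝ, 0 < x →
      HasDerivAt (fun y => ∫ a in Ioi y, ℓ a) (-(ℓ x)) x := by
    intro x hx
    have hev : (fun y => ∫ a in Ioi y, ℓ a)
        =ᶠ[nhds x] fun y => (∫ a in Ioi 0, ℓ a) - ∫ a in (0:ℝ)..y, ℓ a := by
      filter_upwards [Ioi_mem_nhds hx] with y hy
      exact hsplit ℓ hint y (le_of_lt hy)
    exact ((hprim ℓ hℓcont x).const_sub _).congr_of_eventuallyEq hev
  have hFderiv : ∀ x : ℝ, 0 < x →
      HasDerivAt (fun y => ∫ a in Ioi y, ℓ a ^ 2) (-(ℓ x ^ 2)) x := by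
    intro x hx
    have hev : (fun y => ∫ a in Ioi y, ℓ a ^ 2)
        =ᶠ[nhds x] fun y => (∫ a in Ioi 0, ℓ a ^ 2) - ∫ a in (0:ℝ)..y, ℓ a ^ 2 := by
      filter_upwards [Ioi_mem_nhds hx] with y hy
      exact hsplit (fun a => ℓ a ^ 2) hint2 y (le_of_lt hy)
    exact (((hprim (fun a => ℓ a ^ 2) (hℓcont.pow 2) x)).const_sub _).congr_of_eventuallyEq hev
  -- continuity of F and G on Ici 0
  have hGcont : ContinuousOn (fun y => ∫ a in Ioi y, ℓ a) (Ici 0) := by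
    refine ContinuousOn.congr (f := fun y => (∫ a in Ioi 0, ℓ a) - ∫ a in (0:ℝ)..y, ℓ a)
      ?_ (fun y hy => hsplit ℓ hint y hy)
    exact (continuous_const.sub
      (Differentiable.continuous fun y => (hprim ℓ hℓcont y).differentiableAt)).continuousOn
  have hFcont : ContinuousOn (fun y => ∫ a in Ioi y, ℓ a ^ 2) (Ici 0) := by
    refine ContinuousOn.congr (f := fun y => (∫ a in Ioi 0, ℓ a ^ 2) - ∫ a in (0:ℝ)..y, ℓ a ^ 2)
      ?_ (fun y hy => hsplit (fun a => ℓ a ^ 2) hint2 y hy)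
    exact (continuous_const.sub (Differentiable.continuous fun y =>
      (hprim (fun a => ℓ a ^ 2) (hℓcont.pow 2) y).differentiableAt)).continuousOn
  have hganti : StrictAntiOn (fun x => 2 * ((∫ a in Ioi x, ℓ a ^ 2) / (∫ a in Ioi x, ℓ a))
      - (∫ a in Ioi (0:ℝ), ℓ a ^ 2) / (∫ a in Ioi (0:ℝ), ℓ a)) (Ici 0) := by
    refine strictAntiOn_of_deriv_neg (convex_Ici 0) ?_ ?_
    · exact ((continuousOn_const.mul
        (hFcont.div hGcont fun y hy => (hGpos y hy).ne')).sub continuousOn_const)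
    · intro x hx
      rw [interior_Ici] at hx
      have hGne : (∫ a in Ioi x, ℓ a) ≠ 0 := (hGpos x hx.le).ne'
      have hd : HasDerivAt (fun x => 2 * ((∫ a in Ioi x, ℓ a ^ 2) / (∫ a in Ioi x, ℓ a))
            - (∫ a in Ioi (0:ℝ), ℓ a ^ 2) / (∫ a in Ioi (0:ℝ), ℓ a))
          (2 * ((-(ℓ x ^ 2) * (∫ a in Ioi x, ℓ a) - (∫ a in Ioi x, ℓ a ^ 2) * -(ℓ x))
            / (∫ a in Ioi x, ℓ a) ^ 2)) x :=
        (((hFderiv x hx).div (hGderiv x hx) hGne).const_mul 2).sub_const _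
      rw [hd.deriv]
      have h1 := hkey x hx.le
      have h2 := hGpos x hx.le
      have h3 := hℓpos x
      have hnum : -(ℓ x ^ 2) * (∫ a in Ioi x, ℓ a) - (∫ a in Ioi x, ℓ a ^ 2) * -(ℓ x) < 0 := by
        nlinarith
      have := div_neg_of_neg_of_pos hnum (by positivity : (0:ℝ) < (∫ a in Ioi x, ℓ a) ^ 2)
      linarith
  intro a ha b hb hab
  rw [hg a, hg b]
  exact hganti ha hb hab
end

section
/- There exists a unique threshold age a^D > 0 such that g(a^D) = 0, where g(x) = 2(∫ₓ^∞ ℓ(a)² da)/(∫ₓ^∞ ℓ(a) da) − (∫₀^∞ ℓ(a)² da)/(∫₀^∞ ℓ(a) da), for any survival function ℓ(x) = exp(-∫₀ˣ μ) with μ continuous, positive, and ∫₀^∞ ℓ finite. -/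
open MeasureTheory Set Filter

lemma aux_int_pos {f : ℝ → ℝ} {s : Set ℝ} (hs : MeasurableSet s)
    (hp : ∀ x ∈ s, 0 < f x) (hsm : 0 < volume s)
    (hi : IntegrableOn f s) : 0 < ∫ a in s, f a := by
  rw [setIntegral_pos_iff_support_of_nonneg_ae ?_ hi]
  · exact lt_of_lt_of_le hsm (measure_mono fun x hx => ⟨(hp x hx).ne', hx⟩)
  · filter_upwards [ae_restrict_mem hs] with x hx
    exact (hp x hx).le

theorem threshold_age_exists_unique
    (μ : ℝ → ℝ) (hμc : Continuous μ) (hμpos : ∀ x, 0 < μ x)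
    (ℓ : ℝ → ℝ) (hℓ : ∀ x, ℓ x = Real.exp (-∫ a in (0:ℝ)..x, μ a))
    (hint : IntegrableOn ℓ (Ioi 0))
    (hℓ0 : Tendsto ℓ atTop (nhds 0))
    (g : ℝ → ℝ)
    (hg : ∀ x, g x = 2 * ((∫ a in Ioi x, (ℓ a)^2) / (∫ a in Ioi x, ℓ a))
        - (∫ a in Ioi (0:ℝ), (ℓ a)^2) / (∫ a in Ioi (0:ℝ), ℓ a)) :
    ∃! aD : ℝ, 0 < aD ∧ g aD = 0 := by
  -- basic facts about ℓ
  have hℓc : Continuous ℓ := by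
    have h1 : Continuous fun x => ∫ a in (0:ℝ)..x, μ a :=
      intervalIntegral.continuous_primitive (fun a b => hμc.intervalIntegrable a b) 0
    exact (Real.continuous_exp.comp h1.neg).congr fun x => (hℓ x).symm
  have hℓpos : ∀ x, 0 < ℓ x := fun x => (hℓ x) ▸ Real.exp_pos _
  have hℓanti : StrictAnti ℓ := by
    intro x y hxy
    rw [hℓ x, hℓ y, Real.exp_lt_exp, neg_lt_neg_iff]
    have h := intervalIntegral.integral_add_adjacent_intervals
      (hμc.intervalIntegrable 0 x) (hμc.intervalIntegrable x y) (μ := volume)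
    have hpos : 0 < ∫ a in x..y, μ a :=
      intervalIntegral.intervalIntegral_pos_of_pos (hμc.intervalIntegrable x y) hμpos hxy
    linarith
  have hℓ01 : ℓ 0 = 1 := by rw [hℓ 0]; simp
  -- integrability
  have hiP : ∀ x : ℝ, 0 ≤ x → IntegrableOn ℓ (Ioi x) :=
    fun x hx => hint.mono_set (Ioi_subset_Ioi hx)
  have hiQ0 : IntegrableOn (fun a => (ℓ a)^2) (Ioi 0) := by
    refine hint.mono' ((hℓc.pow 2).aestronglyMeasurable.restrict) ?_
    filter_upwards [ae_restrict_mem measurableSet_Ioi] with a ha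
    have h1 : ℓ a ≤ 1 := hℓ01 ▸ (hℓanti.le_iff_ge.mpr (le_of_lt ha))
    have h0 := (hℓpos a).le
    rw [Real.norm_eq_abs, abs_of_nonneg (by positivity : (0:ℝ) ≤ ℓ a ^ 2)]
    nlinarith
  have hiQ : ∀ x : ℝ, 0 ≤ x → IntegrableOn (fun a => (ℓ a)^2) (Ioi x) :=
    fun x hx => hiQ0.mono_set (Ioi_subset_Ioi hx)
  -- abbreviations
  set P : ℝ → ℝ := fun x => ∫ a in Ioi x, ℓ a with hPdef
  set Q : ℝ → ℝ := fun x => ∫ a in Ioi x, (ℓ a)^2 with hQdef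
  have hIoiVol : ∀ x : ℝ, (0:ENNReal) < volume (Ioi x) := by
    intro x; simp [Real.volume_Ioi]
  have hPpos : ∀ x : ℝ, 0 ≤ x → 0 < P x := fun x hx =>
    aux_int_pos measurableSet_Ioi (fun a _ => hℓpos a) (hIoiVol x) (hiP x hx)
  have hQpos : ∀ x : ℝ, 0 ≤ x → 0 < Q x := fun x hx =>
    aux_int_pos measurableSet_Ioi (fun a _ => pow_pos (hℓpos a) 2) (hIoiVol x) (hiQ x hx)
  -- key strict inequality: Q y < ℓ y * P y
  have hkey : ∀ y : ℝ, 0 ≤ y → Q y < ℓ y * P y := by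
    intro y hy
    have hpos : 0 < ∫ a in Ioi y, (ℓ y * ℓ a - (ℓ a)^2) := by
      refine aux_int_pos measurableSet_Ioi ?_ (hIoiVol y)
        (((hiP y hy).const_mul (ℓ y)).sub (hiQ y hy))
      intro a ha
      have := hℓanti ha
      nlinarith [hℓpos a]
    have heq : ∫ a in Ioi y, (ℓ y * ℓ a - (ℓ a)^2) = ℓ y * P y - Q y := by
      rw [integral_sub ((hiP y hy).const_mul (ℓ y)) (hiQ y hy), integral_const_mul]
    linarith [heq ▸ hpos]
  -- splitting lemmas
  have hsplitP : ∀ x y : ℝ, 0 ≤ x → x ≤ y → P x = (∫ a in Ioc x y, ℓ a) + P y := by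
    intro x y hx hxy
    rw [hPdef]
    simp only
    rw [← Ioc_union_Ioi_eq_Ioi hxy,
      setIntegral_union (Ioc_disjoint_Ioi le_rfl) measurableSet_Ioi
        ((hiP x hx).mono_set Ioc_subset_Ioi_self) (hiP y (hx.trans hxy))]
  have hsplitQ : ∀ x y : ℝ, 0 ≤ x → x ≤ y → Q x = (∫ a in Ioc x y, (ℓ a)^2) + Q y := by
    intro x y hx hxy
    rw [hQdef]
    simp only
    rw [← Ioc_union_Ioi_eq_Ioi hxy,
      setIntegral_union (Ioc_disjoint_Ioi le_rfl) measurableSet_Ioi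
        ((hiQ x hx).mono_set Ioc_subset_Ioi_self) (hiQ y (hx.trans hxy))]
  -- strict antitonicity of g on Ici 0
  have hganti : StrictAntiOn g (Ici 0) := by
    intro x hx y hy hxy
    rw [hg x, hg y]
    have hx0 : (0:ℝ) ≤ x := hx
    have hy0 : (0:ℝ) ≤ y := hy
    have hPx := hPpos x hx0
    have hPy := hPpos y hy0
    have hQy := hQpos y hy0
    set A : ℝ := ∫ a in Ioc x y, ℓ a with hA
    set B : ℝ := ∫ a in Ioc x y, (ℓ a)^2 with hB
    have hApos : 0 < A := by
      refine aux_int_pos measurableSet_Ioc (fun a _ => hℓpos a) ?_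
        ((hiP x hx0).mono_set Ioc_subset_Ioi_self)
      rw [Real.volume_Ioc]; exact ENNReal.ofReal_pos.mpr (by linarith)
    have hBA : ℓ y * A ≤ B := by
      rw [hA, hB, ← integral_const_mul]
      refine setIntegral_mono_on (((hiP x hx0).mono_set Ioc_subset_Ioi_self).const_mul _)
        ((hiQ x hx0).mono_set Ioc_subset_Ioi_self) measurableSet_Ioc ?_
      intro a ha
      have h1 : ℓ y ≤ ℓ a := hℓanti.le_iff_ge.mpr ha.2
      nlinarith [hℓpos a]
    have hQPy := hkey y hy0
    have hdiv : Q y / P y < Q x / P x := by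
      rw [div_lt_div_iff₀ hPy hPx, hsplitP x y hx0 hxy.le, hsplitQ x y hx0 hxy.le, ← hA, ← hB]
      nlinarith
    linarith
  -- value at 0
  set D : ℝ := Q 0 / P 0 with hD
  have hDpos : 0 < D := div_pos (hQpos 0 le_rfl) (hPpos 0 le_rfl)
  have hg0 : g 0 = D := by rw [hg 0]; ring
  -- find b with g b < 0
  have hev : ∀ᶠ x in atTop, ℓ x < D / 2 := hℓ0.eventually (gt_mem_nhds (half_pos hDpos))
  obtain ⟨b, hb1, hb2⟩ := (eventually_ge_atTop (1:ℝ)).and hev |>.exists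
  have hb0 : (0:ℝ) ≤ b := by linarith
  have hgb : g b < 0 := by
    rw [hg b]
    have h1 : Q b / P b < ℓ b := (div_lt_iff₀ (hPpos b hb0)).mpr (by linarith [hkey b hb0])
    have : Q b / P b < D / 2 := h1.trans hb2
    linarith
  -- continuity of g on Ici 0
  have hPc : ContinuousOn P (Ici 0) := by
    have hc : Continuous fun x => P 0 - ∫ a in (0:ℝ)..x, ℓ a :=
      continuous_const.sub (intervalIntegral.continuous_primitive
        (fun a b => hℓc.intervalIntegrable a b) 0)
    refine hc.continuousOn.congr ?_
    intro x hx
    have h1 := hsplitP 0 x le_rfl hx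
    have h2 : ∫ a in (0:ℝ)..x, ℓ a = ∫ a in Ioc 0 x, ℓ a :=
      intervalIntegral.integral_of_le hx
    show P x = P 0 - ∫ a in (0:ℝ)..x, ℓ a
    rw [h2]; linarith
  have hQc : ContinuousOn Q (Ici 0) := by
    have hc : Continuous fun x => Q 0 - ∫ a in (0:ℝ)..x, (ℓ a)^2 :=
      continuous_const.sub (intervalIntegral.continuous_primitive
        (fun a b => (hℓc.pow 2).intervalIntegrable a b) 0)
    refine hc.continuousOn.congr ?_
    intro x hx
    have h1 := hsplitQ 0 x le_rfl hx
    have h2 : ∫ a in (0:ℝ)..x, (ℓ a)^2 = ∫ a in Ioc 0 x, (ℓ a)^2 :=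
      intervalIntegral.integral_of_le hx
    show Q x = Q 0 - ∫ a in (0:ℝ)..x, (ℓ a)^2
    rw [h2]; linarith
  have hgc : ContinuousOn g (Ici 0) := by
    have : ContinuousOn (fun x => 2 * (Q x / P x) - D) (Ici 0) :=
      (continuousOn_const.mul (hQc.div hPc fun x hx => (hPpos x hx).ne')).sub continuousOn_const
    exact this.congr fun x _ => hg x
  -- IVT
  have h0 : (0:ℝ) ∈ Ioo (g b) (g 0) := ⟨hgb, hg0 ▸ hDpos⟩
  obtain ⟨aD, haD, hgaD⟩ := intermediate_value_Ioo' hb0 (hgc.mono (Icc_subset_Ici_self)) h0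
  refine ⟨aD, ⟨haD.1, hgaD⟩, ?_⟩
  rintro y ⟨hy, hgy⟩
  exact hganti.injOn (le_of_lt hy) (le_of_lt haD.1) (by rw [hgy, hgaD])
end

section
/- Assume mortality improvements at all ages, i.e., ρ(x) = −μ̇(x)/μ(x) > 0 for all x, and write Ḋ = ∫₀^∞ ρ(x) w(x) W(x) dx with w(x) = μ(x)ℓ(x)e(x) > 0 and W(x) = (2ℓ(x)D(x) − D)/e₀. Then there is a unique age a^D such that the integrand ρ(x)w(x)W(x) is positive for x < a^D and negative for x > a^D. -/
open MeasureTheory Set Filter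

theorem threshold_age_separates_contributions
    (μ : ℝ → ℝ) (hμc : Continuous μ) (hμpos : ∀ x, 0 < μ x)
    (ℓ : ℝ → ℝ) (hℓ : ∀ x, ℓ x = Real.exp (-∫ a in (0:ℝ)..x, μ a))
    (hint : IntegrableOn ℓ (Ioi 0))
    (hpos : 0 < ∫ x in Ioi (0:ℝ), ℓ x)
    (hℓ0 : Tendsto ℓ atTop (nhds 0))
    (ρ : ℝ → ℝ) (hρ : ∀ x, 0 ≤ x → 0 < ρ x)
    (e Dx w W : ℝ → ℝ)
    (he : ∀ x, e x = (∫ a in Ioi x, ℓ a) / ℓ x)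
    (hDx : ∀ x, Dx x = (1 / ℓ x) * ((∫ a in Ioi x, (ℓ a)^2) / (∫ a in Ioi x, ℓ a)))
    (hw : ∀ x, w x = μ x * ℓ x * e x)
    (hW : ∀ x, W x = (2 * ℓ x * Dx x - Dx 0) / (∫ a in Ioi (0:ℝ), ℓ a)) :
    ∃! aD : ℝ, 0 < aD ∧
      (∀ x, 0 ≤ x → x < aD → 0 < ρ x * w x * W x) ∧
      (∀ x, aD < x → ρ x * w x * W x < 0) := by
  -- basic properties of ℓ
  have hℓpos : ∀ x, 0 < ℓ x := fun x => by rw [hℓ]; exact Real.exp_pos _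
  have hℓcont : Continuous ℓ := by
    have h1 : Continuous fun x : ℝ => ∫ a in (0:ℝ)..x, μ a :=
      intervalIntegral.continuous_primitive (fun a b => hμc.intervalIntegrable a b) 0
    have : Continuous fun x : ℝ => Real.exp (-∫ a in (0:ℝ)..x, μ a) :=
      Real.continuous_exp.comp h1.neg
    exact this.congr fun x => (hℓ x).symm
  have hℓanti : StrictAnti ℓ := by
    intro x y hxy
    rw [hℓ x, hℓ y]
    apply Real.exp_lt_exp.2
    have h1 : (∫ a in (0:ℝ)..x, μ a) + ∫ a in x..y, μ a = ∫ a in (0:ℝ)..y, μ a :=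
      intervalIntegral.integral_add_adjacent_intervals
        (hμc.intervalIntegrable 0 x) (hμc.intervalIntegrable x y)
    have h2 : 0 < ∫ a in x..y, μ a :=
      intervalIntegral.intervalIntegral_pos_of_pos (hμc.intervalIntegrable x y) hμpos hxy
    linarith
  have hℓ0one : ℓ 0 = 1 := by rw [hℓ]; simp
  -- notation
  set F : ℝ → ℝ := fun x => ∫ a in Ioi x, ℓ a with hFdef
  set G : ℝ → ℝ := fun x => ∫ a in Ioi x, (ℓ a)^2 with hGdef
  -- integrability
  have hFint : ∀ x, 0 ≤ x → IntegrableOn ℓ (Ioi x) := fun x hx =>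
    hint.mono_set (Ioi_subset_Ioi hx)
  have hGint0 : IntegrableOn (fun a => (ℓ a)^2) (Ioi 0) := by
    refine Integrable.mono hint ((hℓcont.pow 2).aestronglyMeasurable.restrict) ?_
    filter_upwards [ae_restrict_mem measurableSet_Ioi] with a ha
    have h1 : 0 < ℓ a := hℓpos a
    have h2 : ℓ a ≤ 1 := by
      rw [← hℓ0one]; exact (hℓanti.le_iff_ge).2 (le_of_lt ha)
    rw [Real.norm_eq_abs, Real.norm_eq_abs, abs_of_pos (by positivity), abs_of_pos h1]
    nlinarith
  have hGint : ∀ x, 0 ≤ x → IntegrableOn (fun a => (ℓ a)^2) (Ioi x) := fun x hx =>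
    hGint0.mono_set (Ioi_subset_Ioi hx)
  -- positivity of F
  have hFpos : ∀ x, 0 ≤ x → 0 < F x := by
    intro x hx
    refine (setIntegral_pos_iff_support_of_nonneg_ae ?_ (hFint x hx)).2 ?_
    · filter_upwards with a using le_of_lt (hℓpos a)
    · have : Function.support ℓ ∩ Ioi x = Ioi x := by
        apply inter_eq_right.2
        intro a _
        exact ne_of_gt (hℓpos a)
      rw [this, Real.volume_Ioi]
      exact ENNReal.zero_lt_top
  have hGpos0 : 0 < G 0 := by
    refine (setIntegral_pos_iff_support_of_nonneg_ae ?_ (hGint 0 le_rfl)).2 ?_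
    · filter_upwards with a using by positivity
    · have : (Function.support fun a => (ℓ a)^2) ∩ Ioi 0 = Ioi 0 := by
        apply inter_eq_right.2
        intro a _
        have := hℓpos a
        simp only [Function.mem_support]
        positivity
      rw [this, Real.volume_Ioi]
      exact ENNReal.zero_lt_top
  -- key strict inequality G x < ℓ x * F x
  have hkey : ∀ x, 0 ≤ x → G x < ℓ x * F x := by
    intro x hx
    have hsub : 0 < ∫ a in Ioi x, (ℓ x * ℓ a - (ℓ a)^2) := by
      refine (setIntegral_pos_iff_support_of_nonneg_ae ?_ ?_).2 ?_
      · rw [EventuallyLE, ae_restrict_iff' measurableSet_Ioi]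
        filter_upwards with a ha
        have h1 := hℓanti ha
        have h2 := hℓpos a
        simp only [Pi.zero_apply]
        nlinarith
      · exact (((hFint x hx).const_mul (ℓ x)).sub (hGint x hx))
      · have hsup : Ioi x ⊆ Function.support fun a => ℓ x * ℓ a - (ℓ a)^2 := by
          intro a ha
          have := hℓanti ha
          have := hℓpos a
          simp only [Function.mem_support]
          nlinarith
        rw [inter_eq_right.2 hsup, Real.volume_Ioi]
        exact ENNReal.zero_lt_top
    have heq : ∫ a in Ioi x, (ℓ x * ℓ a - (ℓ a)^2) = ℓ x * F x - G x := by
      rw [integral_sub (((hFint x hx)).const_mul (ℓ x)) (hGint x hx),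
        integral_const_mul]
    rw [heq] at hsub
    linarith
  -- splitting lemmas
  have hFsplit : ∀ x y, 0 ≤ x → x ≤ y → F x = (∫ a in Ioc x y, ℓ a) + F y := by
    intro x y hx hxy
    rw [hFdef]
    simp only
    rw [← Ioc_union_Ioi_eq_Ioi hxy,
      setIntegral_union (Ioc_disjoint_Ioi le_rfl) measurableSet_Ioi
        (hℓcont.integrableOn_Ioc) (hFint y (hx.trans hxy))]
  have hGsplit : ∀ x y, 0 ≤ x → x ≤ y → G x = (∫ a in Ioc x y, (ℓ a)^2) + G y := by
    intro x y hx hxy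
    rw [hGdef]
    simp only
    rw [← Ioc_union_Ioi_eq_Ioi hxy,
      setIntegral_union (f := fun a => (ℓ a)^2) (Ioc_disjoint_Ioi le_rfl) measurableSet_Ioi
        ((hℓcont.pow 2).integrableOn_Ioc) (hGint y (hx.trans hxy))]
  -- the ratio function
  set ψ : ℝ → ℝ := fun x => 2 * (G x / F x) - G 0 / F 0 with hψdef
  have hF0 : 0 < F 0 := hFpos 0 le_rfl
  have hc0 : 0 < G 0 / F 0 := div_pos hGpos0 hF0
  -- strict antitonicity of ψ on Ici 0
  have hψanti : ∀ x y, 0 ≤ x → x < y → ψ y < ψ x := by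
    intro x y hx hxy
    have hy : (0:ℝ) ≤ y := hx.trans hxy.le
    have hI : 0 < ∫ a in Ioc x y, ℓ a := by
      refine (setIntegral_pos_iff_support_of_nonneg_ae ?_ hℓcont.integrableOn_Ioc).2 ?_
      · filter_upwards with a using le_of_lt (hℓpos a)
      · have : Function.support ℓ ∩ Ioc x y = Ioc x y :=
          inter_eq_right.2 fun a _ => ne_of_gt (hℓpos a)
        rw [this, Real.volume_Ioc]
        simp [hxy]
    have hJ : ℓ y * (∫ a in Ioc x y, ℓ a) ≤ ∫ a in Ioc x y, (ℓ a)^2 := by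
      rw [← integral_const_mul]
      refine setIntegral_mono_on (hℓcont.integrableOn_Ioc.const_mul _)
        ((hℓcont.pow 2).integrableOn_Ioc) measurableSet_Ioc ?_
      intro a ha
      have h1 : ℓ y ≤ ℓ a := hℓanti.le_iff_ge.2 ha.2
      nlinarith [hℓpos a]
    have hkeyy := hkey y hy
    have hFy := hFpos y hy
    have hmain : G y * F x < G x * F y := by
      rw [hFsplit x y hx hxy.le, hGsplit x y hx hxy.le]
      nlinarith
    have hdiv : G y / F y < G x / F x := by
      rw [div_lt_div_iff₀ hFy (hFpos x hx)]
      linarith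
    simp only [hψdef]
    linarith
  -- continuity of ψ on Ici 0
  have hψcont : ContinuousOn ψ (Ici 0) := by
    have hFcont : ContinuousOn F (Ici 0) := by
      have hc : Continuous fun x => F 0 - ∫ a in (0:ℝ)..x, ℓ a :=
        continuous_const.sub
          (intervalIntegral.continuous_primitive (fun a b => hℓcont.intervalIntegrable a b) 0)
      refine hc.continuousOn.congr ?_
      intro x hx
      show F x = F 0 - ∫ a in (0:ℝ)..x, ℓ a
      rw [intervalIntegral.integral_of_le hx]
      have := hFsplit 0 x le_rfl hx
      linarith
    have hGcont : ContinuousOn G (Ici 0) := by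
      have hc : Continuous fun x => G 0 - ∫ a in (0:ℝ)..x, (ℓ a)^2 :=
        continuous_const.sub
          (intervalIntegral.continuous_primitive
            (fun a b => (hℓcont.pow 2).intervalIntegrable a b) 0)
      refine hc.continuousOn.congr ?_
      intro x hx
      show G x = G 0 - ∫ a in (0:ℝ)..x, (ℓ a)^2
      rw [intervalIntegral.integral_of_le hx]
      have := hGsplit 0 x le_rfl hx
      linarith
    exact (continuousOn_const.mul
      (hGcont.div hFcont (fun x hx => ne_of_gt (hFpos x hx)))).sub continuousOn_const
  -- existence of a point where ψ is negative
  obtain ⟨b₀, hb₀⟩ :=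
    (hℓ0.eventually (eventually_lt_nhds (by positivity : (0:ℝ) < (G 0 / F 0) / 2))).exists_forall_of_atTop
  set b : ℝ := max b₀ 1 with hbdef
  have hb0 : (0:ℝ) ≤ b := le_trans zero_le_one (le_max_right _ _)
  have hψb : ψ b < 0 := by
    have h1 : ℓ b < (G 0 / F 0) / 2 := hb₀ b (le_max_left _ _)
    have h2 : G b / F b < ℓ b := by
      rw [div_lt_iff₀ (hFpos b hb0)]
      have := hkey b hb0
      linarith
    simp only [hψdef]
    linarith
  have hψ0 : ψ 0 = G 0 / F 0 := by simp only [hψdef]; ring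
  -- intermediate value theorem to find the threshold age
  obtain ⟨aD, haDmem, haDeq⟩ :=
    intermediate_value_Ioo' hb0 (hψcont.mono (Icc_subset_Ici_self))
      (show (0:ℝ) ∈ Ioo (ψ b) (ψ 0) by rw [hψ0]; exact ⟨hψb, hc0⟩)
  have haDpos : 0 < aD := haDmem.1
  -- reduce the sign of the integrand to the sign of ψ
  have hwpos : ∀ x, 0 ≤ x → 0 < w x := by
    intro x hx
    rw [hw x, he x]
    have h1 := hμpos x
    have h2 := hℓpos x
    have h3 := hFpos x hx
    positivity
  have hWeq : ∀ x, 0 ≤ x → W x = ψ x / F 0 := by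
    intro x hx
    rw [hW, hDx, hDx, hℓ0one,
      show (∫ a in Ioi x, (ℓ a)^2) = G x from rfl,
      show (∫ a in Ioi x, ℓ a) = F x from rfl,
      show (∫ a in Ioi (0:ℝ), (ℓ a)^2) = G 0 from rfl,
      show (∫ a in Ioi (0:ℝ), ℓ a) = F 0 from rfl]
    have h := (hℓpos x).ne'
    have hFx := (hFpos x hx).ne'
    simp only [hψdef]
    field_simp
  have hsignpos : ∀ x, 0 ≤ x → 0 < ψ x → 0 < ρ x * w x * W x := by
    intro x hx hψx
    rw [hWeq x hx]
    exact mul_pos (mul_pos (hρ x hx) (hwpos x hx)) (div_pos hψx hF0)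
  have hsignneg : ∀ x, 0 ≤ x → ψ x < 0 → ρ x * w x * W x < 0 := by
    intro x hx hψx
    rw [hWeq x hx]
    exact mul_neg_of_pos_of_neg (mul_pos (hρ x hx) (hwpos x hx)) (div_neg_of_neg_of_pos hψx hF0)
  -- main claims for aD
  have hA : ∀ x, 0 ≤ x → x < aD → 0 < ρ x * w x * W x := by
    intro x hx hxlt
    refine hsignpos x hx ?_
    have := hψanti x aD hx hxlt
    rw [haDeq] at this
    linarith
  have hB : ∀ x, aD < x → ρ x * w x * W x < 0 := by
    intro x hxgt
    have hx : 0 ≤ x := le_of_lt (haDpos.trans hxgt)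
    refine hsignneg x hx ?_
    have := hψanti aD x haDpos.le hxgt
    rw [haDeq] at this
    linarith
  refine ⟨aD, ⟨haDpos, hA, hB⟩, ?_⟩
  rintro y ⟨hy0, hy1, hy2⟩
  by_contra hne
  rcases lt_or_gt_of_ne hne with h | h
  · -- y < aD
    set z := (y + aD) / 2 with hz
    have hz1 : y < z := by simp only [hz]; linarith
    have hz2 : z < aD := by simp only [hz]; linarith
    have hz0 : 0 ≤ z := le_of_lt (hy0.trans hz1)
    have := hy2 z hz1
    have := hA z hz0 hz2
    linarith
  · -- aD < y
    set z := (aD + y) / 2 with hz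
    have hz1 : aD < z := by simp only [hz]; linarith
    have hz2 : z < y := by simp only [hz]; linarith
    have hz0 : 0 ≤ z := le_of_lt (haDpos.trans hz1)
    have := hB z hz1
    have := hy1 z hz0 hz2
    linarith
end
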